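/- Let r ≥ 2 be an integer and c₀ > 0, C_r ≥ 0. Then there exists a constant C > 0, depending only on r, c₀ and C_r, with the following property. Let N be a positive integer, h = 1/N, and let δ > 0 satisfy c₀ δ < 1/2. Let χ : ℝ² → ℂ be such that for each θ the function ρ ↦ χ(ρ,θ) is C^r, vanishes for |ρ| ≥ c₀ δ, and satisfies |∂_ρ^r χ(ρ,θ)| ≤ C_r δ^{−r} for all (ρ,θ). Then for all θ ∈ [0,2π], all γ ∈ ℝ and all (m₁,m₂) ∈ ℤ² with |m₁| + |m₂| ≤ N − 1, the radial quadrature error E := | ∫_ℝ χ(ρ,θ) exp(2πi ρ (m₁ cos θ + m₂ sin θ)) dρ − c(θ) h Σ_{q∈ℤ} χ(γ + q c(θ) h, θ) exp(2πi (γ + q c(θ) h)(m₁ cos θ + m₂ sin θ)) | satisfies: E ≤ C δ^{1−r} (N − |m₁ cot θ| − |m₂|)^{−r} if |tan θ| ≥ |cot θ|, and E ≤ C δ^{1−r} (N − |m₁| − |m₂ tan θ|)^{−r} otherwise. -/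

import Mathlib

/-!
By Poisson summation, `H Σ_q f(γ + qH)` with `H = c(θ)h` and `f ρ = χ(ρ,θ) e^{2πiρμ}`,
`μ = m₁ cos θ + m₂ sin θ`, equals `Σ_k e^{2πiγk/H} χ̂(k/H - μ)`, whose `k = 0` term is the integral.
Integrating by parts `r` times gives `(2π|η|)^r |χ̂(η)| ≤ 2c₀δ · C_r δ^{-r}`. Since
`1/H = N max(|cos θ|, |sin θ|)` and `|μ| ≤ max(|cos θ|, |sin θ|) (|m₁ cot θ| + |m₂|)` (resp.
`(|m₁| + |m₂ tan θ|)`), every frequency `k ≠ 0` has `2π|k/H - μ| ≥ |k| D` with `D` the denominator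
of the claim, and `|k|^{-r} ≤ k^{-2}` is summable.
-/

open Real

/-- The angle-dependent weight `c(θ) = min {1/|cos θ|, 1/|sin θ|}`, written as
`(max |cos θ| |sin θ|)⁻¹` (an identical value, avoiding division by zero). -/
noncomputable def cwt (θ : ℝ) : ℝ := (max |Real.cos θ| |Real.sin θ|)⁻¹

/-- The radial quadrature error
`E = |∫_ℝ χ(ρ,θ) e^{2πiρ(m₁cos θ+m₂sin θ)} dρ
      − c(θ)h Σ_{q∈ℤ} χ(γ+qc(θ)h,θ) e^{2πi(γ+qc(θ)h)(m₁cos θ+m₂sin θ)}|`. -/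
noncomputable def radErr (χ : ℝ → ℝ → ℂ) (h θ γ : ℝ) (m₁ m₂ : ℤ) : ℝ :=
  Norm.norm
    ((∫ ρ : ℝ, χ ρ θ *
        Complex.exp (2 * (π : ℂ) * Complex.I * ρ *
          ((m₁ : ℂ) * (Real.cos θ : ℂ) + (m₂ : ℂ) * (Real.sin θ : ℂ)))) -
      (cwt θ : ℂ) * (h : ℂ) * ∑' q : ℤ,
        χ (γ + q * (cwt θ * h)) θ *
          Complex.exp (2 * (π : ℂ) * Complex.I * ((γ + q * (cwt θ * h) : ℝ) : ℂ) *
            ((m₁ : ℂ) * (Real.cos θ : ℂ) + (m₂ : ℂ) * (Real.sin θ : ℂ))))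

open MeasureTheory FourierTransform Set

theorem tsupport_iteratedDeriv_subset {𝕜 E : Type*} [NontriviallyNormedField 𝕜]
    [NormedAddCommGroup E] [NormedSpace 𝕜 E] (f : 𝕜 → E) (n : ℕ) :
    tsupport (iteratedDeriv n f) ⊆ tsupport f := by
  induction n with
  | zero => rw [iteratedDeriv_zero]
  | succ n ih => exact iteratedDeriv_succ (f := f) ▸ tsupport_deriv_subset.trans ih

theorem tsupport_subset_Icc_of_forall_le_abs {E : Type*} [Zero E] {f : ℝ → E} {a : ℝ}
    (hf : ∀ x, a ≤ |x| → f x = 0) : tsupport f ⊆ Icc (-a) a := by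
  refine closure_minimal (fun x hx ↦ ?_) isClosed_Icc
  exact abs_le.1 (not_le.1 fun h ↦ hx (hf x h)).le

theorem norm_fourier_le_of_tsupport_subset_Icc {E : Type*} [NormedAddCommGroup E]
    [NormedSpace ℂ E] {f : ℝ → E} {a B : ℝ} (ha : 0 ≤ a) (hf : tsupport f ⊆ Icc (-a) a)
    (hB : ∀ x, ‖f x‖ ≤ B) (ξ : ℝ) : ‖𝓕 f ξ‖ ≤ 2 * a * B := by
  rw [Real.fourier_real_eq, ← setIntegral_eq_integral_of_forall_compl_eq_zero (s := Icc (-a) a)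
    fun x hx ↦ by rw [image_eq_zero_of_notMem_tsupport (fun h ↦ hx (hf h)), smul_zero]]
  refine (norm_setIntegral_le_of_norm_le_const (C := B) measure_Icc_lt_top fun x _ ↦ ?_).trans_eq ?_
  · rw [Circle.norm_smul]; exact hB x
  · rw [Real.volume_real_Icc, max_eq_left (by linarith)]; ring

theorem pow_mul_norm_fourier_le {E : Type*} [NormedAddCommGroup E] [NormedSpace ℂ E]
    [CompleteSpace E] {φ : ℝ → E} {r : ℕ} (hφ : ContDiff ℝ r φ) {a B : ℝ} (ha : 0 ≤ a)
    (hsupp : tsupport φ ⊆ Icc (-a) a) (hB : ∀ x, ‖iteratedDeriv r φ x‖ ≤ B) (ξ : ℝ) :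
    (2 * π * |ξ|) ^ r * ‖𝓕 φ ξ‖ ≤ 2 * a * B := by
  have hcs : HasCompactSupport φ := .of_isClosed_subset isCompact_Icc (isClosed_tsupport φ) hsupp
  have hint : ∀ n : ℕ, (n : ℕ∞) ≤ r → Integrable (iteratedDeriv n φ) := fun n hn ↦
    (hφ.continuous_iteratedDeriv n (by exact_mod_cast hn)).integrable_of_hasCompactSupport
      (hcs.mono' ((subset_tsupport _).trans (tsupport_iteratedDeriv_subset φ n)))
  have h := norm_fourier_le_of_tsupport_subset_Icc ha
    ((tsupport_iteratedDeriv_subset φ r).trans hsupp) hB ξ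
  rwa [Real.fourier_iteratedDeriv hφ hint le_rfl, norm_smul, norm_pow, norm_mul, norm_mul,
    norm_mul, Complex.norm_I, Complex.norm_real, Complex.norm_real, Complex.norm_ofNat,
    Real.norm_of_nonneg pi_pos.le, mul_one] at h

theorem fourier_comp_add_mul {E : Type*} [NormedAddCommGroup E] [NormedSpace ℂ E]
    (f : ℝ → E) {H : ℝ} (hH : H ≠ 0) (γ ξ : ℝ) :
    𝓕 (fun x ↦ f (γ + x * H)) ξ = |H|⁻¹ • 𝐞 (γ * ξ / H) • 𝓕 f (ξ / H) := by
  set F : ℝ → E := fun u ↦ 𝐞 (-((u - γ) / H * ξ)) • f u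
  have hF : F = fun u ↦ 𝐞 (γ * ξ / H) • 𝐞 (-(u * (ξ / H))) • f u := funext fun u ↦ by
    rw [← mul_smul, ← AddChar.map_add_eq_mul]
    simp only [F]
    congr 2
    field_simp
    ring
  calc 𝓕 (fun x ↦ f (γ + x * H)) ξ = ∫ x, F (γ + x * H) := by
        rw [Real.fourier_real_eq]
        congr 1 with x
        simp only [F, add_sub_cancel_left, mul_div_cancel_right₀ _ hH]
    _ = |H|⁻¹ • ∫ u, F u := by
        rw [Measure.integral_comp_mul_right (fun y ↦ F (γ + y)), integral_add_left_eq_self,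
          abs_inv]
    _ = _ := by simp only [hF, Real.fourier_real_eq, Circle.smul_def, integral_smul]

theorem fourier_mul_exp (f : ℝ → ℂ) (μ ξ : ℝ) :
    𝓕 (fun x : ℝ ↦ f x * Complex.exp (2 * π * Complex.I * x * μ)) ξ = 𝓕 f (ξ - μ) := by
  simp_rw [Real.fourier_real_eq_integral_exp_smul]
  congr 1 with x
  rw [smul_eq_mul, smul_eq_mul, mul_left_comm, ← Complex.exp_add, mul_comm]
  congr 2
  push_cast
  ring

theorem smul_tsum_comp_add_mul_eq_tsum_fourier {f : ℝ → ℂ} (hf : Continuous f)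
    (hcs : HasCompactSupport f) {H : ℝ} (hH : 0 < H) (γ : ℝ)
    (hsum : Summable fun k : ℤ ↦ ‖𝓕 f (k / H)‖) :
    H • ∑' q : ℤ, f (γ + q * H) = ∑' k : ℤ, 𝐞 (γ * k / H) • 𝓕 f (k / H) := by
  set g : ℝ → ℂ := fun x ↦ f (γ + x * H)
  have hg_cs : HasCompactSupport g := by
    convert hcs.comp_homeomorph ((Homeomorph.mulRight₀ H hH.ne').trans (Homeomorph.addLeft γ))
    rfl
  have hg_decay : g =O[Filter.cocompact ℝ] fun x ↦ |x| ^ (-2 : ℝ) := by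
    refine Filter.EventuallyEq.trans_isBigO ?_ (Asymptotics.isBigO_zero _ _)
    filter_upwards [hg_cs.isCompact.compl_mem_cocompact] with x hx
    exact image_eq_zero_of_notMem_tsupport hx
  have hFg : ∀ k : ℤ, 𝓕 g k = H⁻¹ • 𝐞 (γ * k / H) • 𝓕 f (k / H) := fun k ↦ by
    rw [fourier_comp_add_mul f hH.ne', abs_of_pos hH]
  have hg_sum : Summable fun k : ℤ ↦ 𝓕 g k := by
    refine .of_norm ((hsum.mul_left H⁻¹).congr fun k ↦ ?_)
    rw [hFg, norm_smul, Circle.norm_smul, Real.norm_of_nonneg (inv_pos.2 hH).le]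
  have hpoisson := Real.tsum_eq_tsum_fourier_of_rpow_decay_of_summable
    (show Continuous g from hf.comp (by fun_prop)) one_lt_two hg_decay hg_sum 0
  simp only [zero_add, QuotientAddGroup.mk_zero, fourier_eval_zero, mul_one] at hpoisson
  change H • ∑' q : ℤ, g q = _
  rw [hpoisson, ← tsum_const_smul'']
  simp_rw [hFg, smul_inv_smul₀ hH.ne']

theorem norm_integral_sub_mul_tsum_le {f : ℝ → ℂ} (hf : Continuous f)
    (hcs : HasCompactSupport f) {H : ℝ} (hH : 0 < H) (γ : ℝ) {b : ℤ → ℝ} (hb : Summable b)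
    (hb0 : 0 ≤ b 0) (hfb : ∀ k : ℤ, k ≠ 0 → ‖𝓕 f (k / H)‖ ≤ b k) :
    ‖(∫ x, f x) - (H : ℂ) * ∑' q : ℤ, f (γ + q * H)‖ ≤ ∑' k, b k := by
  classical
  set F : ℤ → ℂ := fun k ↦ 𝐞 (γ * k / H) • 𝓕 f (k / H)
  have hFnorm : ∀ k, ‖F k‖ = ‖𝓕 f (k / H)‖ := fun k ↦ Circle.norm_smul _ _
  have hsum : Summable fun k : ℤ ↦ ‖𝓕 f (k / H)‖ :=
    .of_norm_bounded_eventually hb <| (Filter.eventually_cofinite_ne 0).mono fun k hk ↦ by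
      rw [norm_norm]; exact hfb k hk
  have hF0 : ∫ x, f x = F 0 := by simp [F, Real.fourier_real_eq]
  have hite : ∀ k, ‖if k = 0 then 0 else F k‖ ≤ b k := fun k ↦ by
    split_ifs with hk
    · rwa [hk, norm_zero]
    · rw [hFnorm]; exact hfb k hk
  have hite_sum : Summable fun k ↦ ‖if k = 0 then 0 else F k‖ :=
    .of_nonneg_of_le (fun _ ↦ norm_nonneg _) hite hb
  rw [hF0, ← Complex.real_smul, smul_tsum_comp_add_mul_eq_tsum_fourier hf hcs hH γ hsum,
    (Summable.of_norm (hsum.congr fun k ↦ (hFnorm k).symm)).tsum_eq_add_tsum_ite 0,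
    sub_add_cancel_left, norm_neg]
  exact (norm_tsum_le_tsum_norm hite_sum).trans (hite_sum.tsum_le_tsum hite hb)

theorem norm_integral_mul_exp_sub_mul_tsum_le {φ : ℝ → ℂ} {r : ℕ} (hr : 2 ≤ r)
    (hφ : ContDiff ℝ r φ) {a B : ℝ} (ha : 0 ≤ a) (hsupp : tsupport φ ⊆ Icc (-a) a)
    (hB : ∀ x, ‖iteratedDeriv r φ x‖ ≤ B) {H : ℝ} (hH : 0 < H) (γ μ : ℝ) {D : ℝ} (hD : 0 < D)
    (hgap : ∀ k : ℤ, k ≠ 0 → D * |(k : ℝ)| ≤ 2 * π * |k / H - μ|) :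
    ‖(∫ x : ℝ, φ x * Complex.exp (2 * π * Complex.I * x * μ)) -
        (H : ℂ) * ∑' q : ℤ, φ (γ + q * H) *
          Complex.exp (2 * π * Complex.I * ((γ + q * H : ℝ) : ℂ) * μ)‖ ≤
      2 * a * B / D ^ r * ∑' k : ℤ, 1 / (k : ℝ) ^ 2 := by -- the `k = 0` term is `1 / 0 = 0`
  have hcs : HasCompactSupport φ := .of_isClosed_subset isCompact_Icc (isClosed_tsupport φ) hsupp
  have hB0 : 0 ≤ B := (norm_nonneg _).trans (hB 0)
  refine (norm_integral_sub_mul_tsum_le (f := fun x ↦ φ x * Complex.exp (2 * π * Complex.I * x * μ))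
    (by fun_prop) hcs.mul_right hH γ ((summable_one_div_int_pow.2 one_lt_two).mul_left _)
    (by positivity) fun k hk ↦ ?_).trans_eq tsum_mul_left
  have hk1 : (1 : ℝ) ≤ |(k : ℝ)| := by exact_mod_cast Int.one_le_abs hk
  have hgap_pow : D ^ r * (k : ℝ) ^ 2 ≤ (2 * π * |k / H - μ|) ^ r :=
    calc D ^ r * (k : ℝ) ^ 2 ≤ D ^ r * |(k : ℝ)| ^ r := by
          rw [← sq_abs]; gcongr
      _ ≤ _ := by rw [← mul_pow]; exact pow_le_pow_left₀ (by positivity) (hgap k hk) r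
  rw [fourier_mul_exp, div_mul_div_comm, mul_one, le_div_iff₀ (by positivity), mul_comm]
  exact (mul_le_mul_of_nonneg_right hgap_pow (norm_nonneg _)).trans
    (pow_mul_norm_fourier_le hφ ha hsupp hB _)

theorem mul_abs_le_two_pi_mul_abs_mul_sub {N M A μ x : ℝ} (hM : 1 ≤ 2 * π * M) (hA : 0 ≤ A)
    (hAN : A ≤ N) (hμ : |μ| ≤ M * A) (hx : 1 ≤ |x|) :
    (N - A) * |x| ≤ 2 * π * |x * (N * M) - μ| := by
  have hM0 : 0 < M := by nlinarith [pi_pos]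
  have h : M * (|x| * (N - A)) ≤ |x * (N * M) - μ| :=
    calc M * (|x| * (N - A)) ≤ |x| * (N * M) - M * A := by
          nlinarith [mul_nonneg (mul_nonneg hM0.le hA) (sub_nonneg.2 hx)]
      _ ≤ |x * (N * M)| - |μ| := by
          rw [abs_mul, abs_of_nonneg (by nlinarith : 0 ≤ N * M)]; linarith
      _ ≤ _ := abs_sub_abs_le_abs_sub _ _
  have hxNA : 0 ≤ |x| * (N - A) := mul_nonneg (abs_nonneg x) (sub_nonneg.2 hAN)
  nlinarith [mul_le_mul_of_nonneg_left h (by positivity : (0 : ℝ) ≤ 2 * π)]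

theorem one_le_two_pi_mul_max_abs_cos_abs_sin (θ : ℝ) :
    1 ≤ 2 * π * max |cos θ| |sin θ| := by
  have h : 1 / 2 ≤ max |cos θ| |sin θ| := by
    by_contra! hlt
    nlinarith [sin_sq_add_cos_sq θ, sq_abs (cos θ), sq_abs (sin θ), abs_nonneg (cos θ),
      abs_nonneg (sin θ), (le_max_left |cos θ| |sin θ|).trans_lt hlt,
      (le_max_right |cos θ| |sin θ|).trans_lt hlt]
  nlinarith [pi_gt_three]

theorem radErr_le {r : ℕ} (hr : 2 ≤ r) {χ : ℝ → ℝ → ℂ} {θ : ℝ}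
    (hχ : ContDiff ℝ r fun ρ ↦ χ ρ θ) {a B : ℝ} (ha : 0 ≤ a)
    (hsupp : ∀ ρ, a ≤ |ρ| → χ ρ θ = 0) (hB : ∀ ρ, ‖iteratedDeriv r (fun ρ' ↦ χ ρ' θ) ρ‖ ≤ B)
    {N : ℕ} (hN : 0 < N) (γ : ℝ) (m₁ m₂ : ℤ) {A : ℝ} (hA : 0 ≤ A) (hAN : A < N)
    (hμ : |m₁ * cos θ + m₂ * sin θ| ≤ max |cos θ| |sin θ| * A) {C : ℝ}
    (hC : 2 * a * B * ∑' k : ℤ, 1 / (k : ℝ) ^ 2 ≤ C) :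
    radErr χ (1 / N) θ γ m₁ m₂ ≤ C / (N - A) ^ r := by
  have hM := one_le_two_pi_mul_max_abs_cos_abs_sin θ
  have hM0 : 0 < max |cos θ| |sin θ| := by nlinarith [pi_pos]
  have hH : 0 < cwt θ * (1 / N) := by unfold cwt; positivity
  have hgap : ∀ k : ℤ, k ≠ 0 → (N - A) * |(k : ℝ)| ≤
      2 * π * |k / (cwt θ * (1 / N)) - (m₁ * cos θ + m₂ * sin θ)| := fun k hk ↦ by
    rw [cwt, div_eq_mul_inv (k : ℝ), mul_inv, inv_inv, one_div, inv_inv, mul_comm _ (N : ℝ)]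
    exact mul_abs_le_two_pi_mul_abs_mul_sub hM hA hAN.le hμ (by exact_mod_cast Int.one_le_abs hk)
  have key := norm_integral_mul_exp_sub_mul_tsum_le hr hχ ha
    (tsupport_subset_Icc_of_forall_le_abs hsupp) hB hH γ _ (by linarith) hgap
  rw [div_mul_eq_mul_div] at key
  unfold radErr
  push_cast at key ⊢
  refine le_trans ?_ (div_le_div_of_nonneg_right hC (pow_pos (by linarith) r).le)
  simpa only [mul_assoc] using key

theorem sin_ne_zero_of_abs_cos_le {θ : ℝ} (h : |cos θ| ≤ |sin θ|) : sin θ ≠ 0 := fun hs ↦ by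
  have hc : cos θ = 0 := by simpa [hs] using h
  simpa [hs, hc] using sin_sq_add_cos_sq θ

theorem cos_ne_zero_of_abs_sin_le {θ : ℝ} (h : |sin θ| ≤ |cos θ|) : cos θ ≠ 0 := fun hc ↦ by
  have hs : sin θ = 0 := by simpa [hc] using h
  simpa [hs, hc] using sin_sq_add_cos_sq θ

theorem abs_mul_cot_le_of_abs_cos_le {θ : ℝ} (h : |cos θ| ≤ |sin θ|) (x : ℝ) :
    |x * cot θ| ≤ |x| := by
  rw [abs_mul, cot_eq_cos_div_sin, abs_div]
  exact mul_le_of_le_one_right (abs_nonneg x)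
    (div_le_one_of_le₀ h (abs_nonneg _))

theorem abs_mul_tan_le_of_abs_sin_le {θ : ℝ} (h : |sin θ| ≤ |cos θ|) (x : ℝ) :
    |x * tan θ| ≤ |x| := by
  rw [abs_mul, tan_eq_sin_div_cos, abs_div]
  exact mul_le_of_le_one_right (abs_nonneg x)
    (div_le_one_of_le₀ h (abs_nonneg _))

theorem abs_mul_cos_add_mul_sin_le_of_abs_cos_le {θ : ℝ} (h : |cos θ| ≤ |sin θ|) (x y : ℝ) :
    |x * cos θ + y * sin θ| ≤ max |cos θ| |sin θ| * (|x * cot θ| + |y|) := by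
  have hx : sin θ * (x * cot θ) = x * cos θ := by
    rw [cot_eq_cos_div_sin]; field_simp [sin_ne_zero_of_abs_cos_le h]
  rw [max_eq_right h, mul_add, ← abs_mul, ← abs_mul, hx, mul_comm (sin θ) y]
  exact abs_add_le _ _

theorem abs_mul_cos_add_mul_sin_le_of_abs_sin_le {θ : ℝ} (h : |sin θ| ≤ |cos θ|) (x y : ℝ) :
    |x * cos θ + y * sin θ| ≤ max |cos θ| |sin θ| * (|x| + |y * tan θ|) := by
  have hy : cos θ * (y * tan θ) = y * sin θ := by
    rw [tan_eq_sin_div_cos]; field_simp [cos_ne_zero_of_abs_sin_le h]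
  rw [max_eq_left h, mul_add, ← abs_mul, ← abs_mul, hy, mul_comm (cos θ) x]
  exact abs_add_le _ _

/-- For `r ≥ 2`, `c₀ > 0`, `C_r ≥ 0` there is `C > 0` such that for all
`N`, `h = 1/N`, `δ` with `c₀δ < 1/2`, all `χ` that are `C^r` in `ρ`, vanish for
`|ρ| ≥ c₀δ` and satisfy `|∂_ρ^r χ| ≤ C_r δ^{−r}`, all `θ ∈ [0,2π]`, `γ ∈ ℝ` and
`(m₁,m₂)` with `|m₁|+|m₂| ≤ N−1`, the radial quadrature error is bounded by
`C δ^{1−r} (N − |m₁ cot θ| − |m₂|)^{−r}` when `|tan θ| ≥ |cot θ|`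
(equivalently `|cos θ| ≤ |sin θ|`) and by
`C δ^{1−r} (N − |m₁| − |m₂ tan θ|)^{−r}` otherwise. -/
theorem stmt5 (r : ℕ) (hr : 2 ≤ r) (c₀ Cr : ℝ) (hc₀ : 0 < c₀) (hCr : 0 ≤ Cr) :
    ∃ C > 0, ∀ N : ℕ, 0 < N → ∀ δ : ℝ, 0 < δ → c₀ * δ < 1 / 2 →
      ∀ χ : ℝ → ℝ → ℂ,
        (∀ θ : ℝ, ContDiff ℝ (r : ℕ∞) fun ρ => χ ρ θ) →
        (∀ ρ θ : ℝ, c₀ * δ ≤ |ρ| → χ ρ θ = 0) →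
        (∀ ρ θ : ℝ, Norm.norm (iteratedDeriv r (fun ρ' => χ ρ' θ) ρ) ≤ Cr / δ ^ r) →
        ∀ θ ∈ Set.Icc (0 : ℝ) (2 * π), ∀ γ : ℝ, ∀ m₁ m₂ : ℤ, |m₁| + |m₂| ≤ (N : ℤ) - 1 →
          (|Real.cos θ| ≤ |Real.sin θ| →
            radErr χ (1 / N) θ γ m₁ m₂ ≤
              C * δ ^ ((1 : ℤ) - r) /
                ((N : ℝ) - |(m₁ : ℝ) * Real.cot θ| - |(m₂ : ℝ)|) ^ r) ∧
          (|Real.sin θ| < |Real.cos θ| →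
            radErr χ (1 / N) θ γ m₁ m₂ ≤
              C * δ ^ ((1 : ℤ) - r) /
                ((N : ℝ) - |(m₁ : ℝ)| - |(m₂ : ℝ) * Real.tan θ|) ^ r) := by
  set K : ℝ := ∑' k : ℤ, 1 / (k : ℝ) ^ 2
  have hK : 0 ≤ K := tsum_nonneg fun k ↦ by positivity
  refine ⟨2 * c₀ * Cr * K + 1, by positivity, ?_⟩
  intro N hN δ hδ _ χ hχ hsupp hder θ _ γ m₁ m₂ hm
  have hm' : |(m₁ : ℝ)| + |(m₂ : ℝ)| < N := by
    have : ((|m₁| + |m₂| : ℤ) : ℝ) ≤ ((N : ℤ) - 1 : ℤ) := by exact_mod_cast hm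
    push_cast at this
    linarith
  have hC : 2 * (c₀ * δ) * (Cr / δ ^ r) * K ≤ (2 * c₀ * Cr * K + 1) * δ ^ ((1 : ℤ) - r) := by
    rw [zpow_sub₀ hδ.ne', zpow_one, zpow_natCast]
    calc 2 * (c₀ * δ) * (Cr / δ ^ r) * K = 2 * c₀ * Cr * K * (δ / δ ^ r) := by ring
      _ ≤ _ := by gcongr; linarith
  have ha : 0 ≤ c₀ * δ := (mul_pos hc₀ hδ).le
  refine ⟨fun h ↦ ?_, fun h ↦ ?_⟩
  · rw [sub_sub]
    exact radErr_le hr (hχ θ) ha (hsupp · θ) (hder · θ) hN γ m₁ m₂ (by positivity)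
      (by linarith [abs_mul_cot_le_of_abs_cos_le h m₁])
      (abs_mul_cos_add_mul_sin_le_of_abs_cos_le h _ _) hC
  · rw [sub_sub]
    exact radErr_le hr (hχ θ) ha (hsupp · θ) (hder · θ) hN γ m₁ m₂ (by positivity)
      (by linarith [abs_mul_tan_le_of_abs_sin_le h.le m₂])
      (abs_mul_cos_add_mul_sin_le_of_abs_sin_le h.le _ _) hC
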